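/- arXiv:1003.1441 — 2 statements merged into one kernel-verified Lean document; each statement's English description precedes it below -/
import Mathlib

section
/- Let (K, U) be the unique solution on (0, ∞) of the system τ²·K·U = -(1 - K²)·K' and U' = (1 - K²)²/τ⁴ with K(0⁺) = 1, U(0⁺) = 0, K(∞) = 0, U(∞) = 1. Then there exist constants C₁, C₂ > 0 and τ₁ > 0 such that for all 0 < τ ≤ τ₁ one has |K(τ) - 1| ≤ C₁·τ² and 0 < U(τ) ≤ C₂·τ. -/
/-!
Write `g = (1 - K²)²` for the defect. The system gives `g' = 4τ²K²U` and `U' = g/τ⁴ ≥ 0`, so `U`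
increases from `0` to `1`, while `K` stays near `1` close to the origin. Comparing with powers of
`τ` at `0⁺` bootstraps the decay: `U ≤ 1` gives `g = O(τ³)`, i.e. `1 - K² = O(τ^{3/2})`; then
`(τ⁴U - τg)' = 4τ³U(1 - K²) = O(τ^{9/2})` makes `U/τ + 4√τ` increasing, so `U = O(τ)`; fed
back, this gives `g = O(τ⁴)`, i.e. `K - 1 = O(τ²)`. If `U` vanished at some `t > 0`, it would
vanish on `(0, t]`, forcing `g(t) = 0`; Grönwall's inequality for `g + U` beyond `t` would then
keep `U ≡ 0`, contradicting `U(∞) = 1`.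
-/

open Real Filter Set

/-- The Bogomolny system `τ² K U = -(1 - K²) K'`, `U' = (1 - K²)² / τ⁴` on `(0, ∞)`,
with boundary conditions `K(0⁺) = 1`, `U(0⁺) = 0`, `K(∞) = 0`, `U(∞) = 1`. -/
def IsBogomolnySol (K U : ℝ → ℝ) : Prop :=
  (∀ τ ∈ Set.Ioi (0 : ℝ), DifferentiableAt ℝ K τ ∧ DifferentiableAt ℝ U τ) ∧
  (∀ τ ∈ Set.Ioi (0 : ℝ), τ ^ 2 * K τ * U τ = -(1 - (K τ) ^ 2) * deriv K τ) ∧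
  (∀ τ ∈ Set.Ioi (0 : ℝ), deriv U τ = (1 - (K τ) ^ 2) ^ 2 / τ ^ 4) ∧
  Tendsto K (nhdsWithin 0 (Set.Ioi 0)) (nhds 1) ∧
  Tendsto U (nhdsWithin 0 (Set.Ioi 0)) (nhds 0) ∧
  Tendsto K atTop (nhds 0) ∧
  Tendsto U atTop (nhds 1)

open Topology

theorem monotoneOn_Ioc_of_hasDerivAt_nonneg {f f' : ℝ → ℝ} {a b : ℝ}
    (hf : ∀ x ∈ Ioc a b, HasDerivAt f (f' x) x) (hf' : ∀ x ∈ Ioo a b, 0 ≤ f' x) :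
    MonotoneOn f (Ioc a b) := by
  refine monotoneOn_of_hasDerivWithinAt_nonneg (convex_Ioc a b)
    (fun x hx => (hf x hx).continuousAt.continuousWithinAt) (fun x hx => ?_) (by simpa using hf')
  rw [interior_Ioc] at hx ⊢
  exact (hf x (Ioo_subset_Ioc_self hx)).hasDerivWithinAt

theorem nonneg_of_hasDerivAt_nonneg_of_tendsto_nhdsGT {f f' : ℝ → ℝ} {a b : ℝ}
    (hf : ∀ x ∈ Ioc a b, HasDerivAt f (f' x) x) (hf' : ∀ x ∈ Ioo a b, 0 ≤ f' x)
    (hlim : Tendsto f (𝓝[>] a) (𝓝 0)) {x : ℝ} (hx : x ∈ Ioc a b) : 0 ≤ f x := by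
  refine le_of_tendsto hlim ?_
  filter_upwards [Ioo_mem_nhdsGT hx.1] with y hy
  exact monotoneOn_Ioc_of_hasDerivAt_nonneg hf hf' ⟨hy.1, hy.2.le.trans hx.2⟩ hx hy.2.le

theorem abs_sub_one_le_of_one_sub_sq_sq_le {k b : ℝ} (hk : 0 ≤ k) (hb : 0 ≤ b)
    (h : (1 - k ^ 2) ^ 2 ≤ b ^ 2) : |k - 1| ≤ b := by
  refine abs_le_of_sq_le_sq (le_trans ?_ h) hb
  nlinarith [mul_nonneg (sq_nonneg (k - 1)) (by positivity : 0 ≤ k ^ 2 + 2 * k)]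

namespace IsBogomolnySol

variable {K U : ℝ → ℝ} {τ : ℝ}

theorem hasDerivAt_defect (hsol : IsBogomolnySol K U) (hτ : 0 < τ) :
    HasDerivAt (fun t => (1 - K t ^ 2) ^ 2) (4 * τ ^ 2 * K τ ^ 2 * U τ) τ := by
  refine ((((hsol.1 τ hτ).1.hasDerivAt.fun_pow 2).const_sub 1).fun_pow 2).congr_deriv ?_
  push_cast
  linear_combination (-4 * K τ) * hsol.2.1 τ hτ

theorem hasDerivAt_U (hsol : IsBogomolnySol K U) (hτ : 0 < τ) :
    HasDerivAt U ((1 - K τ ^ 2) ^ 2 / τ ^ 4) τ :=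
  hsol.2.2.1 τ hτ ▸ (hsol.1 τ hτ).2.hasDerivAt

theorem tendsto_defect (hsol : IsBogomolnySol K U) :
    Tendsto (fun t => (1 - K t ^ 2) ^ 2) (𝓝[>] 0) (𝓝 0) := by
  simpa using ((tendsto_const_nhds (x := (1 : ℝ))).sub (hsol.2.2.2.1.pow 2)).pow 2

theorem monotoneOn_U (hsol : IsBogomolnySol K U) : MonotoneOn U (Ioi 0) :=
  monotoneOn_of_hasDerivWithinAt_nonneg (f' := fun t => (1 - K t ^ 2) ^ 2 / t ^ 4) (convex_Ioi 0)
    (fun x hx => (hsol.hasDerivAt_U hx).continuousAt.continuousWithinAt)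
    (fun x hx => (hsol.hasDerivAt_U (by simpa using hx)).hasDerivWithinAt)
    (fun x _ => by positivity)

theorem U_nonneg (hsol : IsBogomolnySol K U) (hτ : 0 < τ) : 0 ≤ U τ := by
  refine le_of_tendsto hsol.2.2.2.2.1 ?_
  filter_upwards [Ioo_mem_nhdsGT hτ] with t ht
  exact hsol.monotoneOn_U ht.1 hτ ht.2.le

theorem U_le_one (hsol : IsBogomolnySol K U) (hτ : 0 < τ) : U τ ≤ 1 := by
  refine ge_of_tendsto hsol.2.2.2.2.2.2 ?_
  filter_upwards [eventually_ge_atTop τ] with t ht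
  exact hsol.monotoneOn_U hτ (hτ.trans_le ht) ht

theorem defect_add_U_eq_zero_of_le (hsol : IsBogomolnySol K U) {t b : ℝ} (ht : 0 < t)
    (htb : t ≤ b) (h0 : (1 - K t ^ 2) ^ 2 + U t = 0) : (1 - K b ^ 2) ^ 2 + U b = 0 := by
  have hpos : ∀ x ∈ Icc t b, 0 < x := fun x hx => ht.trans_le hx.1
  obtain ⟨M, hM⟩ := isCompact_Icc.exists_bound_of_continuousOn (f := K)
    fun x hx => (hsol.1 x (hpos x hx)).1.continuousAt.continuousWithinAt
  have hderiv : ∀ x ∈ Icc t b, HasDerivAt (fun s => (1 - K s ^ 2) ^ 2 + U s)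
      (4 * x ^ 2 * K x ^ 2 * U x + (1 - K x ^ 2) ^ 2 / x ^ 4) x :=
    fun x hx => (hsol.hasDerivAt_defect (hpos x hx)).add (hsol.hasDerivAt_U (hpos x hx))
  refine eq_zero_of_abs_deriv_le_mul_abs_self_of_eq_zero_right
    (K := 4 * b ^ 2 * M ^ 2 + 1 / t ^ 4) (fun x hx => (hderiv x hx).continuousAt.continuousWithinAt)
    (fun x hx => (hderiv x (Ico_subset_Icc_self hx)).hasDerivWithinAt) h0 (fun x hx => ?_)
    b ⟨htb, le_rfl⟩
  replace hx := Ico_subset_Icc_self hx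
  have hx₀ := hpos x hx
  have hU := hsol.U_nonneg hx₀
  have hK : K x ^ 2 ≤ M ^ 2 :=
    sq_le_sq.2 ((abs_of_nonneg ((norm_nonneg _).trans (hM t ⟨le_rfl, htb⟩))).symm ▸ hM x hx)
  have hx2 : x ^ 2 ≤ b ^ 2 := pow_le_pow_left₀ hx₀.le hx.2 2
  rw [Real.norm_of_nonneg (by positivity), Real.norm_of_nonneg (by positivity)]
  calc 4 * x ^ 2 * K x ^ 2 * U x + (1 - K x ^ 2) ^ 2 / x ^ 4
      ≤ 4 * b ^ 2 * M ^ 2 * U x + (1 - K x ^ 2) ^ 2 / t ^ 4 := by gcongr; exact hx.1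
    _ ≤ (4 * b ^ 2 * M ^ 2 + 1 / t ^ 4) * ((1 - K x ^ 2) ^ 2 + U x) := by
      rw [div_eq_mul_one_div]
      nlinarith [mul_nonneg (by positivity : (0 : ℝ) ≤ 4 * b ^ 2 * M ^ 2)
        (sq_nonneg (1 - K x ^ 2)), mul_nonneg (by positivity : (0 : ℝ) ≤ 1 / t ^ 4) hU]

theorem U_pos (hsol : IsBogomolnySol K U) (hτ : 0 < τ) : 0 < U τ := by
  refine (hsol.U_nonneg hτ).lt_of_ne' fun hU => ?_
  have hU_zero : ∀ t ∈ Ioc 0 τ, U t = 0 := fun t ht =>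
    le_antisymm (hU ▸ hsol.monotoneOn_U ht.1 hτ ht.2) (hsol.U_nonneg ht.1)
  have hdefect : 0 ≤ -(1 - K τ ^ 2) ^ 2 :=
    nonneg_of_hasDerivAt_nonneg_of_tendsto_nhdsGT (f := fun t => -(1 - K t ^ 2) ^ 2)
      (fun x hx => (hsol.hasDerivAt_defect hx.1).neg)
      (fun x hx => by simp [hU_zero x (Ioo_subset_Ioc_self hx)])
      (by simpa using hsol.tendsto_defect.neg) ⟨hτ, le_rfl⟩
  have hU_eventually : ∀ᶠ b in atTop, 0 = U b := by
    filter_upwards [eventually_ge_atTop τ] with b hb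
    have := hsol.defect_add_U_eq_zero_of_le hτ hb (by linarith [sq_nonneg (1 - K τ ^ 2)])
    linarith [sq_nonneg (1 - K b ^ 2), hsol.U_nonneg (hτ.trans_le hb)]
  exact zero_ne_one <|
    tendsto_nhds_unique (tendsto_const_nhds.congr' hU_eventually) hsol.2.2.2.2.2.2

section NearOrigin

variable {τ₁ : ℝ}

theorem defect_le_of_U_le (hsol : IsBogomolnySol K U) {k c : ℝ} {n : ℕ}
    (hK : ∀ t ∈ Ioc 0 τ₁, K t ^ 2 ≤ k) (hU : ∀ t ∈ Ioc 0 τ₁, U t ≤ c * t ^ n)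
    (hτ : τ ∈ Ioc 0 τ₁) : (1 - K τ ^ 2) ^ 2 ≤ 4 * k * c / (n + 3) * τ ^ (n + 3) := by
  have hderiv : ∀ x ∈ Ioc 0 τ₁,
      HasDerivAt (fun t => 4 * k * c / (n + 3) * t ^ (n + 3) - (1 - K t ^ 2) ^ 2)
        (4 * k * c * x ^ (n + 2) - 4 * x ^ 2 * K x ^ 2 * U x) x := by
    intro x hx
    refine (((hasDerivAt_pow (n + 3) x).const_mul _).sub
      (hsol.hasDerivAt_defect hx.1)).congr_deriv ?_
    push_cast
    field_simp
  have hderiv_nonneg :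
      ∀ x ∈ Ioo 0 τ₁, 0 ≤ 4 * k * c * x ^ (n + 2) - 4 * x ^ 2 * K x ^ 2 * U x := by
    intro x hx
    have hk : 0 ≤ k := (sq_nonneg _).trans (hK x (Ioo_subset_Ioc_self hx))
    have hU₀ := hsol.U_nonneg hx.1
    rw [sub_nonneg]
    calc 4 * x ^ 2 * K x ^ 2 * U x ≤ 4 * x ^ 2 * k * (c * x ^ n) := by
          gcongr
          exacts [hK x (Ioo_subset_Ioc_self hx), hU x (Ioo_subset_Ioc_self hx)]
      _ = 4 * k * c * x ^ (n + 2) := by ring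
  have hlim : Tendsto (fun t => 4 * k * c / (n + 3) * t ^ (n + 3) - (1 - K t ^ 2) ^ 2)
      (𝓝[>] 0) (𝓝 0) := by
    have hpow : Tendsto (fun t : ℝ => t ^ (n + 3)) (𝓝[>] 0) (𝓝 0) := by
      simpa using tendsto_nhdsWithin_of_tendsto_nhds ((continuous_pow (n + 3)).tendsto (0 : ℝ))
    simpa using (hpow.const_mul (4 * k * c / (n + 3))).sub hsol.tendsto_defect
  linarith [nonneg_of_hasDerivAt_nonneg_of_tendsto_nhdsGT hderiv hderiv_nonneg hlim hτ]

theorem pow_four_mul_U_le (hsol : IsBogomolnySol K U)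
    (hg : ∀ t ∈ Ioc 0 τ₁, (1 - K t ^ 2) ^ 2 ≤ 4 * t ^ 3) (hτ : τ ∈ Ioc 0 τ₁) :
    τ ^ 4 * U τ ≤ τ * (1 - K τ ^ 2) ^ 2 + 2 * τ ^ 5 * √τ := by
  have hderiv : ∀ x ∈ Ioc 0 τ₁,
      HasDerivAt (fun t => t * (1 - K t ^ 2) ^ 2 + 2 * t ^ 5 * √t - t ^ 4 * U t)
        (4 * x ^ 3 * U x * (K x ^ 2 - 1) + 11 * x ^ 4 * √x) x := by
    intro x hx
    refine ((((hasDerivAt_id' x).mul (hsol.hasDerivAt_defect hx.1)).add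
      (((hasDerivAt_pow 5 x).const_mul 2).mul (hasDerivAt_sqrt hx.1.ne'))).sub
      ((hasDerivAt_pow 4 x).mul (hsol.hasDerivAt_U hx.1))).congr_deriv ?_
    have hx₀ : x ≠ 0 := hx.1.ne'
    have hsqrt₀ : √x ≠ 0 := (sqrt_pos.2 hx.1).ne'
    field_simp
    linear_combination (-x ^ 4) * sq_sqrt hx.1.le
  refine sub_nonneg.1 (nonneg_of_hasDerivAt_nonneg_of_tendsto_nhdsGT hderiv (fun x hx => ?_) ?_ hτ)
  · have hx₀ : 0 < x := hx.1
    have hK := abs_le.1 <| abs_le_of_sq_le_sq (a := 1 - K x ^ 2) (b := 2 * x * √x)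
      (by rw [mul_pow, mul_pow, sq_sqrt hx₀.le]; linarith [hg x (Ioo_subset_Ioc_self hx)])
      (by positivity)
    have hU₀ := hsol.U_nonneg hx₀
    have hU₁ := hsol.U_le_one hx₀
    nlinarith [mul_nonneg (mul_nonneg (pow_nonneg hx₀.le 3) hU₀)
        (by linarith : 0 ≤ K x ^ 2 - 1 + 2 * x * √x),
      mul_nonneg (mul_nonneg (pow_nonneg hx₀.le 3) (sub_nonneg.2 hU₁))
        (by positivity : 0 ≤ 2 * x * √x),
      mul_pos (pow_pos hx₀ 4) (sqrt_pos.2 hx₀)]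
  · have hid : Tendsto (fun t : ℝ => t) (𝓝[>] 0) (𝓝 0) :=
      tendsto_nhdsWithin_of_tendsto_nhds tendsto_id
    simpa using ((hid.mul hsol.tendsto_defect).add
      (((hid.pow 5).const_mul 2).mul (tendsto_nhdsWithin_of_tendsto_nhds
        (continuous_sqrt.tendsto' 0 0 sqrt_zero)))).sub ((hid.pow 4).mul hsol.2.2.2.2.1)

theorem U_le_mul (hsol : IsBogomolnySol K U)
    (hg : ∀ t ∈ Ioc 0 τ₁, (1 - K t ^ 2) ^ 2 ≤ 4 * t ^ 3) (hτ : τ ∈ Ioc 0 τ₁) :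
    U τ ≤ (U τ₁ / τ₁ + 4 * √τ₁) * τ := by
  have hderiv : ∀ x ∈ Ioc 0 τ₁, HasDerivAt (fun t => U t / t + 4 * √t)
      ((x * (1 - K x ^ 2) ^ 2 + 2 * x ^ 5 * √x - x ^ 4 * U x) / x ^ 6) x := by
    intro x hx
    refine (((hsol.hasDerivAt_U hx.1).div (hasDerivAt_id' x) hx.1.ne').add
      ((hasDerivAt_sqrt hx.1.ne').const_mul 4)).congr_deriv ?_
    have hx₀ : x ≠ 0 := hx.1.ne'
    have hsqrt₀ : √x ≠ 0 := (sqrt_pos.2 hx.1).ne'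
    field_simp
    linear_combination (-4 * x ^ 4) * sq_sqrt hx.1.le
  have hmono := monotoneOn_Ioc_of_hasDerivAt_nonneg hderiv fun x hx =>
    div_nonneg (sub_nonneg.2 (hsol.pow_four_mul_U_le hg (Ioo_subset_Ioc_self hx))) (by positivity)
  have := hmono hτ ⟨hτ.1.trans_le hτ.2, le_rfl⟩ hτ.2
  rw [← div_le_iff₀ hτ.1]
  linarith [sqrt_nonneg τ]

end NearOrigin

end IsBogomolnySol

/-- Asymptotic estimates at `τ = 0`: there exist constants `C₁, C₂ > 0` and
`τ₁ > 0` such that for all `0 < τ ≤ τ₁`, `|K(τ) - 1| ≤ C₁ τ²` and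
`0 < U(τ) ≤ C₂ τ`. -/
theorem monopole_asymptotics_at_origin
    (K U : ℝ → ℝ) (hsol : IsBogomolnySol K U) :
    ∃ C₁ C₂ τ₁ : ℝ, 0 < C₁ ∧ 0 < C₂ ∧ 0 < τ₁ ∧
      ∀ τ : ℝ, 0 < τ → τ ≤ τ₁ →
        |K τ - 1| ≤ C₁ * τ ^ 2 ∧ (0 < U τ ∧ U τ ≤ C₂ * τ) := by
  obtain ⟨τ₁, hτ₁, hK⟩ : ∃ τ₁ > 0, Ioc 0 τ₁ ⊆ K ⁻¹' Icc (1 / 2) (3 / 2) :=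
    mem_nhdsGT_iff_exists_Ioc_subset.1 <|
      hsol.2.2.2.1 <| Icc_mem_nhds (by norm_num) (by norm_num)
  have hK_sq : ∀ t ∈ Ioc 0 τ₁, K t ^ 2 ≤ 9 / 4 := fun t ht => by
    obtain ⟨h₁, h₂⟩ := hK ht
    nlinarith
  have hg₃ : ∀ t ∈ Ioc 0 τ₁, (1 - K t ^ 2) ^ 2 ≤ 4 * t ^ 3 := fun t ht => by
    have := hsol.defect_le_of_U_le (c := 1) (n := 0) hK_sq
      (fun t ht => by simpa using hsol.U_le_one ht.1) ht
    norm_num at this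
    linarith [pow_pos ht.1 3]
  set C₂ := U τ₁ / τ₁ + 4 * √τ₁
  have hC₂ : 0 < C₂ := add_pos_of_nonneg_of_pos
    (div_nonneg (hsol.U_nonneg hτ₁) hτ₁.le) (by positivity)
  have hU : ∀ t ∈ Ioc 0 τ₁, U t ≤ C₂ * t ^ 1 := fun t ht => by
    simpa using hsol.U_le_mul hg₃ ht
  refine ⟨3 / 2 * √C₂, C₂, τ₁, by positivity, hC₂, hτ₁, fun τ hτ hττ₁ =>
    ⟨?_, hsol.U_pos hτ, by simpa using hU τ ⟨hτ, hττ₁⟩⟩⟩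
  refine abs_sub_one_le_of_one_sub_sq_sq_le (by linarith [(hK ⟨hτ, hττ₁⟩).1]) (by positivity) ?_
  have := hsol.defect_le_of_U_le hK_sq hU ⟨hτ, hττ₁⟩
  rw [mul_pow, mul_pow, sq_sqrt hC₂.le]
  norm_num at this ⊢
  linarith
end

section
/- Fix m < -1 and for each n ∈ ℝ let V(·; n) : [0, ∞) → ℝ be the unique solution of V'' + 3V' = R(V), V(0) = m, V'(0) = n, and let β⁻ = {n : there exists t > 0 with V'(t; n) < 0}. Then β⁻ is open and contains the interval (-∞, 0); in particular β⁻ is nonempty. -/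
/-!
Write `v = G - e^G` with `G = Q v`. Then `dR/dG = 4 e^G (1 - e^G)` lies between `0` and
`4 dv/dG`, so `R` and `v ↦ 4 v - R v` are both monotone and `R` is `4`-Lipschitz. The phase
field `(V, V') ↦ (V', R V - 3 V')` is then Lipschitz, and Grönwall's inequality makes
`n ↦ V'(t; n)` continuous for each `t ≥ 0`; hence `β⁻` is open. For `n < 0` we have
`V'(0; n) = n < 0`, and continuity of `V'` at `0` gives a `t > 0` with `V'(t; n) < 0`.
-/

open Real Filter Set Topology NNReal

theorem lipschitzWith_of_monotone_of_monotone_sub {f : ℝ → ℝ} {K : ℝ≥0} (hf : Monotone f)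
    (hKf : Monotone fun x => K * x - f x) : LipschitzWith K f := by
  refine LipschitzWith.of_le_add_mul K fun x y => ?_
  rcases le_total x y with hxy | hyx
  · have := hf hxy
    have : 0 ≤ (K : ℝ) * dist x y := by positivity
    linarith
  · have := hKf hyx
    rw [Real.dist_eq, abs_of_nonneg (sub_nonneg.2 hyx)]
    simp only at this
    linarith

theorem strictMonoOn_sub_exp : StrictMonoOn (fun x : ℝ => x - exp x) (Iic 0) := by
  refine strictMonoOn_of_deriv_pos (convex_Iic 0) (by fun_prop) fun x hx => ?_
  rw [interior_Iic] at hx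
  have h : HasDerivAt (fun x => x - exp x) (1 - exp x) x :=
    (hasDerivAt_id' x).sub (hasDerivAt_exp x)
  rw [h.deriv]
  simpa using exp_lt_one_iff.2 hx

theorem monotoneOn_neg_two_mul_one_sub_exp_sq :
    MonotoneOn (fun x : ℝ => -2 * (1 - exp x) ^ 2) (Iic 0) := by
  intro a ha b hb hab
  have := exp_le_exp.2 hab
  have := exp_le_one_iff.2 hb
  simp only
  nlinarith

theorem monotone_four_mul_sub_exp_add_two_mul_one_sub_exp_sq :
    Monotone fun x : ℝ => 4 * (x - exp x) + 2 * (1 - exp x) ^ 2 := by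
  have hderiv (x : ℝ) : HasDerivAt (fun x => 4 * (x - exp x) + 2 * (1 - exp x) ^ 2)
      (4 * (1 - exp x) ^ 2) x := by
    refine ((((hasDerivAt_id' x).fun_sub (hasDerivAt_exp x)).const_mul 4).fun_add
      ((((hasDerivAt_exp x).const_sub 1).fun_pow 2).const_mul 2)).congr_deriv ?_
    push_cast
    ring
  exact monotone_of_hasDerivAt_nonneg hderiv fun x => by positivity

theorem lipschitzWith_four_of_inverse_sub_exp {Q R : ℝ → ℝ}
    (hQ : ∀ v : ℝ, v < -1 → Q v < 0 ∧ Q v - Real.exp (Q v) = v)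
    (hR : ∀ v : ℝ, R v = if v < -1 then -2 * (1 - Real.exp (Q v)) ^ 2 else 4 * (v + 1)) :
    LipschitzWith 4 R := by
  set P : ℝ → ℝ := fun v => if v < -1 then Q v else 0 with hP
  have hP_nonpos : ∀ v, P v ∈ Iic 0 := fun v => by
    by_cases hv : v < -1
    · simpa [hP, hv] using (hQ v hv).1.le
    · simp [hP, hv]
  have hP_inv : ∀ v, P v - exp (P v) = min v (-1) := fun v => by
    by_cases hv : v < -1
    · simp [hP, hv, (hQ v hv).2, hv.le]
    · simp [hP, hv, (not_lt.1 hv)]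
  have hP_mono : Monotone P := fun a b hab =>
    (strictMonoOn_sub_exp.le_iff_le (hP_nonpos a) (hP_nonpos b)).1 <| by
      simpa only [hP_inv] using min_le_min_right (-1) hab
  have hR_eq : R = fun v => -2 * (1 - exp (P v)) ^ 2 + 4 * max (v + 1) 0 := funext fun v => by
    by_cases hv : v < -1
    · simp [hR, hP, hv, show v + 1 ≤ 0 by linarith]
    · simp [hR, hP, hv, show 0 ≤ v + 1 by linarith]
  have hR_sub : (fun v => (4 : ℝ≥0) * v - R v) =
      fun v => 4 * (P v - exp (P v)) + 2 * (1 - exp (P v)) ^ 2 := funext fun v => by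
    by_cases hv : v < -1
    · simp only [hR, hP, hv, if_true, (hQ v hv).2]; push_cast; ring
    · simp only [hR, hP, hv, if_false]; push_cast; rw [exp_zero]; ring
  refine lipschitzWith_of_monotone_of_monotone_sub ?_ ?_
  · rw [hR_eq]
    refine Monotone.add (fun a b hab => ?_) ?_
    · exact monotoneOn_neg_two_mul_one_sub_exp_sq (hP_nonpos a) (hP_nonpos b) (hP_mono hab)
    · exact fun a b hab => by gcongr
  · rw [hR_sub]
    exact monotone_four_mul_sub_exp_add_two_mul_one_sub_exp_sq.comp hP_mono

section SecondOrder

variable {R : ℝ → ℝ} {c : ℝ}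

def phaseField (R : ℝ → ℝ) (c : ℝ) (p : ℝ × ℝ) : ℝ × ℝ := (p.2, R p.1 - c * p.2)

theorem lipschitzWith_phaseField {K : ℝ≥0} (hR : LipschitzWith K R) (c : ℝ) :
    LipschitzWith (max 1 (K + ‖c‖₊)) (phaseField R c) := by
  have h := LipschitzWith.prod_snd.prodMk
    ((hR.comp LipschitzWith.prod_fst).sub ((lipschitzWith_smul c).comp LipschitzWith.prod_snd))
  simp only [mul_one] at h
  exact h

def IsForwardSolution (R : ℝ → ℝ) (c : ℝ) (u : ℝ → ℝ) : Prop :=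
  ∀ t, 0 ≤ t → DifferentiableAt ℝ u t ∧ DifferentiableAt ℝ (deriv u) t ∧
    deriv (deriv u) t + c * deriv u t = R (u t)

theorem IsForwardSolution.hasDerivAt_phase {u : ℝ → ℝ} (hu : IsForwardSolution R c u) {t : ℝ}
    (ht : 0 ≤ t) :
    HasDerivAt (fun s => (u s, deriv u s)) (phaseField R c (u t, deriv u t)) t := by
  obtain ⟨hu₁, hu₂, hode⟩ := hu t ht
  refine hu₁.hasDerivAt.prodMk (hu₂.hasDerivAt.congr_deriv ?_)
  linarith

theorem IsForwardSolution.dist_phase_le {K : ℝ≥0} (hR : LipschitzWith K R) {u w : ℝ → ℝ}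
    (hu : IsForwardSolution R c u) (hw : IsForwardSolution R c w) {T : ℝ} (hT : 0 ≤ T) :
    dist (u T, deriv u T) (w T, deriv w T) ≤
      dist (u 0, deriv u 0) (w 0, deriv w 0) * exp (max 1 (K + ‖c‖₊) * T) := by
  have hcont {v : ℝ → ℝ} (hv : IsForwardSolution R c v) :
      ContinuousOn (fun s => (v s, deriv v s)) (Icc 0 T) := fun s hs =>
    (hv.hasDerivAt_phase hs.1).continuousAt.continuousWithinAt
  have hderiv {v : ℝ → ℝ} (hv : IsForwardSolution R c v) : ∀ s ∈ Ico 0 T,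
      HasDerivWithinAt (fun s => (v s, deriv v s)) (phaseField R c (v s, deriv v s)) (Ici s) s :=
    fun s hs => (hv.hasDerivAt_phase hs.1).hasDerivWithinAt
  simpa using dist_le_of_trajectories_ODE (fun _ => lipschitzWith_phaseField hR c)
    (hcont hu) (hderiv hu) (hcont hw) (hderiv hw) le_rfl T ⟨hT, le_rfl⟩

theorem continuous_deriv_apply_of_isForwardSolution {K : ℝ≥0} (hR : LipschitzWith K R)
    {V : ℝ → ℝ → ℝ} {m : ℝ} (hV : ∀ n, IsForwardSolution R c (V n))
    (hic : ∀ n, V n 0 = m ∧ deriv (V n) 0 = n) {t : ℝ} (ht : 0 ≤ t) :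
    Continuous fun n => deriv (V n) t := by
  refine (LipschitzWith.of_dist_le' (K := exp (max 1 (K + ‖c‖₊) * t)) fun n n' => ?_).continuous
  calc dist (deriv (V n) t) (deriv (V n') t)
      ≤ dist (V n t, deriv (V n) t) (V n' t, deriv (V n') t) := by
        rw [Prod.dist_eq]; exact le_max_right _ _
    _ ≤ dist (V n 0, deriv (V n) 0) (V n' 0, deriv (V n') 0) * exp (max 1 (K + ‖c‖₊) * t) :=
        (hV n).dist_phase_le hR (hV n') ht
    _ = exp (max 1 (K + ‖c‖₊) * t) * dist n n' := by
        simp [Prod.dist_eq, hic, mul_comm]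

end SecondOrder

theorem shooting_set_minus_open_nonempty_general
    (Q R : ℝ → ℝ)
    (hQ : ∀ v : ℝ, v < -1 → Q v < 0 ∧ Q v - Real.exp (Q v) = v)
    (hR : ∀ v : ℝ, R v = if v < -1 then -2 * (1 - Real.exp (Q v)) ^ 2 else 4 * (v + 1))
    (m : ℝ)
    (V : ℝ → ℝ → ℝ)
    (hdiff : ∀ n : ℝ, ∀ t : ℝ, 0 ≤ t →
      DifferentiableAt ℝ (V n) t ∧ DifferentiableAt ℝ (deriv (V n)) t)
    (hode : ∀ n : ℝ, ∀ t : ℝ, 0 ≤ t →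
      deriv (deriv (V n)) t + 3 * deriv (V n) t = R (V n t))
    (hic : ∀ n : ℝ, V n 0 = m ∧ deriv (V n) 0 = n)
    (Bm : Set ℝ)
    (hBm : Bm = {n : ℝ | ∃ t > 0, deriv (V n) t < 0}) :
    IsOpen Bm ∧ Set.Iio (0 : ℝ) ⊆ Bm ∧ Bm.Nonempty := by
  have hsol (n : ℝ) : IsForwardSolution R 3 (V n) := fun t ht =>
    ⟨(hdiff n t ht).1, (hdiff n t ht).2, hode n t ht⟩
  have hcont {t : ℝ} (ht : 0 ≤ t) : Continuous fun n => deriv (V n) t :=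
    continuous_deriv_apply_of_isForwardSolution (lipschitzWith_four_of_inverse_sub_exp hQ hR)
      hsol hic ht
  have hneg : Iio 0 ⊆ Bm := fun n hn => by
    rw [hBm]
    have h0 : deriv (V n) 0 < 0 := by rw [(hic n).2]; exact hn
    exact ((hdiff n 0 le_rfl).2.continuousAt.eventually_lt continuousAt_const h0).exists_gt
  refine ⟨?_, hneg, -1, hneg (by norm_num)⟩
  rw [hBm, isOpen_iff_mem_nhds]
  rintro n ⟨t, ht, hn⟩
  filter_upwards [(hcont ht.le).continuousAt.eventually_lt continuousAt_const hn] with n' hn'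
  exact ⟨t, ht, hn'⟩

/-- For fixed `m < -1` and the shooting family `V(·; n)` solving
`V'' + 3V' = R(V)`, `V(0) = m`, `V'(0) = n`, the set
`β⁻ = {n : ∃ t > 0, V'(t;n) < 0}` is open and contains `(-∞, 0)`;
in particular `β⁻` is nonempty. -/
theorem shooting_set_minus_open_nonempty
    (Q R : ℝ → ℝ)
    (hQ : ∀ v : ℝ, v < -1 → Q v < 0 ∧ Q v - Real.exp (Q v) = v)
    (hR : ∀ v : ℝ, R v = if v < -1 then -2 * (1 - Real.exp (Q v)) ^ 2 else 4 * (v + 1))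
    (m : ℝ) (hm : m < -1)
    (V : ℝ → ℝ → ℝ)
    (hdiff : ∀ n : ℝ, ∀ t : ℝ, 0 ≤ t →
      DifferentiableAt ℝ (V n) t ∧ DifferentiableAt ℝ (deriv (V n)) t)
    (hode : ∀ n : ℝ, ∀ t : ℝ, 0 ≤ t →
      deriv (deriv (V n)) t + 3 * deriv (V n) t = R (V n t))
    (hic : ∀ n : ℝ, V n 0 = m ∧ deriv (V n) 0 = n)
    (Bm : Set ℝ)
    (hBm : Bm = {n : ℝ | ∃ t > 0, deriv (V n) t < 0}) :
    IsOpen Bm ∧ Set.Iio (0 : ℝ) ⊆ Bm ∧ Bm.Nonempty :=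
  shooting_set_minus_open_nonempty_general Q R hQ hR m V hdiff hode hic Bm hBm
end
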